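/- Let X be a topological space. The subgroup QZ_b(X) of bounded residual functions is a direct summand of the group B(X,ℤ) of all bounded functions X → ℤ: there exists a subgroup H of B(X,ℤ) such that B(X,ℤ) is the internal direct sum of QZ_b(X) and H. -/

import Mathlib

/-- A function `f : X → ℤ` on a topological space is *residual* if `f⁻¹(0)`
contains an open dense subset of `X`. -/
def IsResidualFn {X : Type*} [TopologicalSpace X] (f : X → ℤ) : Prop :=
  ∃ U : Set X, IsOpen U ∧ Dense U ∧ U ⊆ f ⁻¹' {0}

/-- `B(X,ℤ)`: the group of all bounded functions `X → ℤ`, as a subgroup of `X → ℤ`. -/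
def boundedFns (X : Type*) : AddSubgroup (X → ℤ) where
  carrier := {f | ∃ N : ℤ, ∀ x, |f x| ≤ N}
  add_mem' := by
    rintro f g ⟨N, hN⟩ ⟨M, hM⟩
    exact ⟨N + M, fun x => (abs_add_le _ _).trans (add_le_add (hN x) (hM x))⟩
  zero_mem' := ⟨0, fun x => by simp⟩
  neg_mem' := by
    rintro f ⟨N, hN⟩
    exact ⟨N, fun x => by simpa using hN x⟩

/-- `QZ_b(X)`: the group of bounded residual functions, as a subgroup of `X → ℤ`. -/
def residualBoundedFns (X : Type*) [TopologicalSpace X] : AddSubgroup (X → ℤ) where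
  carrier := {f | IsResidualFn f ∧ f ∈ boundedFns X}
  add_mem' := by
    rintro f g ⟨⟨U, hU, hUd, hUf⟩, hfb⟩ ⟨⟨V, hV, hVd, hVg⟩, hgb⟩
    refine ⟨⟨U ∩ V, hU.inter hV, hUd.inter_of_isOpen_left hVd hU, fun x hx => ?_⟩,
      add_mem hfb hgb⟩
    have h1 : f x = 0 := hUf hx.1
    have h2 : g x = 0 := hVg hx.2
    simp [h1, h2]
  zero_mem' := ⟨⟨Set.univ, isOpen_univ, dense_univ, fun x _ => rfl⟩,
    zero_mem (boundedFns X)⟩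
  neg_mem' := by
    rintro f ⟨⟨U, hU, hUd, hUf⟩, hfb⟩
    refine ⟨⟨U, hU, hUd, fun x hx => ?_⟩, neg_mem hfb⟩
    have h1 : f x = 0 := hUf hx
    simp [h1]

/-!
A bounded `f : X → ℤ` takes finitely many values, so it converges along every ultrafilter, and
its limits form a locally constant function on the Stone space `Ultrafilter X`; every locally
constant function `g` arises this way, from `g ∘ pure`. Restricting to the closed set `K` of
ultrafilters finer than the filter of sets containing a dense open set gives a homomorphism
`B(X,ℤ) → C(K,ℤ)` with kernel `QZ_b(X)`, since a set lies in a filter iff it lies in every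
finer ultrafilter. It is onto because clopen subsets of the closed set `K` extend to clopen
subsets of `Ultrafilter X`. By Nöbeling's theorem `C(K,ℤ)` is free, so the surjection splits.
-/

open Set Filter Function Topology

section Splitting

theorem AddMonoidHom.isCompl_ker_range_of_rightInverse {M N : Type*} [AddGroup M] [AddGroup N]
    {φ : M →+ N} {s : N →+ M} (hs : RightInverse s φ) : IsCompl φ.ker s.range := by
  constructor
  · rw [disjoint_iff, eq_bot_iff]
    rintro _ ⟨hsn, n, rfl⟩
    have hn : n = 0 := (hs n).symm.trans hsn
    rw [hn, map_zero]
    exact zero_mem _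
  · rw [codisjoint_iff, eq_top_iff]
    intro m _
    rw [← sub_add_cancel m (s (φ m))]
    exact AddSubgroup.add_mem_sup (by simp [hs (φ m)]) ⟨φ m, rfl⟩

variable {M N : Type*} [AddCommGroup M] [AddCommGroup N]

theorem AddMonoidHom.exists_rightInverse_of_surjective [Module.Projective ℤ N] {φ : M →+ N}
    (hφ : Surjective φ) : ∃ s : N →+ M, RightInverse s φ := by
  obtain ⟨s, hs⟩ :=
    Module.projective_lifting_property φ.toIntLinearMap LinearMap.id hφ
  exact ⟨s.toAddMonoidHom, LinearMap.congr_fun hs⟩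

theorem AddSubgroup.exists_compl_map_ker_of_surjective {G : Type*} [AddCommGroup G]
    [Module.Projective ℤ N] {B : AddSubgroup G} {φ : B →+ N} (hφ : Surjective φ) :
    ∃ H ≤ B, φ.ker.map B.subtype ⊓ H = ⊥ ∧ φ.ker.map B.subtype ⊔ H = B := by
  obtain ⟨s, hs⟩ := AddMonoidHom.exists_rightInverse_of_surjective hφ
  have hcompl := AddMonoidHom.isCompl_ker_range_of_rightInverse hs
  refine ⟨s.range.map B.subtype, map_subtype_le _, ?_, ?_⟩
  · rw [← map_inf_eq _ _ _ B.subtype_injective, hcompl.inf_eq_bot, map_bot]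
  · rw [← map_sup, hcompl.sup_eq_top, ← AddMonoidHom.range_eq_map, range_subtype]

end Splitting

section Extension

variable {Y : Type*} [TopologicalSpace Y] [CompactSpace Y] [T2Space Y]
  [TotallyDisconnectedSpace Y] {K : Set Y}

theorem IsClosed.exists_isClopen_preimage_val_eq (hK : IsClosed K) {C : Set K}
    (hC : IsClopen C) : ∃ O : Set Y, IsClopen O ∧ Subtype.val ⁻¹' O = C := by
  have hclosedMap := hK.isClosedEmbedding_subtypeVal.isClosedMap
  obtain ⟨O, hO, hCO, hOC⟩ := exists_clopen_of_closed_subset_open (hclosedMap C hC.isClosed)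
    (hclosedMap Cᶜ hC.compl.isClosed).isOpen_compl
    (subset_compl_iff_disjoint_right.mpr
      ((disjoint_image_iff Subtype.val_injective).mpr disjoint_compl_right))
  refine ⟨O, hO, Subset.antisymm (fun x hx => ?_) (image_subset_iff.mp hCO)⟩
  by_contra hxC
  exact hOC hx ⟨x, hxC, rfl⟩

theorem LocallyConstant.comapAddMonoidHom_subtypeVal_surjective (hK : IsClosed K) :
    Surjective (comapAddMonoidHom ⟨Subtype.val, continuous_subtype_val⟩ :
      LocallyConstant Y ℤ →+ LocallyConstant K ℤ) := by
  classical
  have : CompactSpace K := isCompact_iff_compactSpace.mp hK.isCompact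
  intro g
  choose O hO hOg using fun v : ℤ =>
    hK.exists_isClopen_preimage_val_eq (g.isLocallyConstant.isClopen_fiber v)
  refine ⟨∑ v ∈ g.range_finite.toFinset, v • charFn ℤ (hO v), ?_⟩
  ext w
  have hmem (v : ℤ) : (w : Y) ∈ O v ↔ g w = v := Set.ext_iff.mp (hOg v) w
  have hw : g w ∈ g.range_finite.toFinset := by simp
  simp only [map_sum, ← evalAddMonoidHom_apply]
  simp [-zsmul_eq_mul, coe_charFn, Set.indicator, hmem, hw]

end Extension

section Ultrafilters

variable {X : Type*}

theorem finite_range_of_mem_boundedFns {f : X → ℤ} (hf : f ∈ boundedFns X) :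
    (range f).Finite := by
  obtain ⟨N, hN⟩ := hf
  refine (finite_Icc (-N) N).subset ?_
  rintro _ ⟨x, rfl⟩
  exact abs_le.mp (hN x)

theorem mem_boundedFns_of_finite_range {f : X → ℤ} (hf : (range f).Finite) :
    f ∈ boundedFns X := by
  obtain ⟨N, hN⟩ := (hf.image abs).bddAbove
  exact ⟨N, fun x => hN ⟨f x, mem_range_self x, rfl⟩⟩

theorem exists_tendsto_of_mem_boundedFns {f : X → ℤ} (hf : f ∈ boundedFns X)
    (u : Ultrafilter X) : ∃ v, Tendsto f u (𝓝 v) := by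
  obtain ⟨v, -, hv⟩ := (finite_range_of_mem_boundedFns hf).isCompact.ultrafilter_le_nhds
    (u.map f) (by simp)
  exact ⟨v, hv⟩

theorem limUnder_eq_iff_of_mem_boundedFns {f : X → ℤ} (hf : f ∈ boundedFns X)
    (u : Ultrafilter X) {v : ℤ} : limUnder (u : Filter X) f = v ↔ ∀ᶠ x in u, f x = v :=
  (limUnder_eq_iff (exists_tendsto_of_mem_boundedFns hf u)).trans <| by
    rw [nhds_discrete, tendsto_pure]

theorem isLocallyConstant_limUnder {f : X → ℤ} (hf : f ∈ boundedFns X) :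
    IsLocallyConstant fun u : Ultrafilter X => limUnder (u : Filter X) f := by
  refine (IsLocallyConstant.iff_isOpen_fiber).mpr fun v => ?_
  simp only [preimage, mem_singleton_iff, limUnder_eq_iff_of_mem_boundedFns hf]
  exact ultrafilter_isOpen_basic _

noncomputable def ultrafilterLim : boundedFns X →+ LocallyConstant (Ultrafilter X) ℤ where
  toFun f := ⟨fun u => limUnder (u : Filter X) f, isLocallyConstant_limUnder f.2⟩
  map_zero' := LocallyConstant.ext fun _ => tendsto_const_nhds.limUnder_eq
  map_add' f g := LocallyConstant.ext fun u =>
    ((tendsto_nhds_limUnder (exists_tendsto_of_mem_boundedFns f.2 u)).add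
      (tendsto_nhds_limUnder (exists_tendsto_of_mem_boundedFns g.2 u))).limUnder_eq

theorem ultrafilterLim_surjective : Surjective (ultrafilterLim (X := X)) := by
  intro g
  refine ⟨⟨g ∘ pure, mem_boundedFns_of_finite_range
    (g.range_finite.subset (range_comp_subset_range _ _))⟩, LocallyConstant.ext fun u => ?_⟩
  exact ((g.continuous.tendsto u).comp (Ultrafilter.tendsto_pure_self u)).limUnder_eq

end Ultrafilters

section EventuallyZero

variable {X : Type*} (F : Filter X)

def ultrafiltersLE : Set (Ultrafilter X) := {u | ↑u ≤ F}

theorem isClosed_ultrafiltersLE : IsClosed (ultrafiltersLE F) := by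
  have : ultrafiltersLE F = ⋂ s ∈ F, {u : Ultrafilter X | s ∈ u} := by
    ext u
    simp [ultrafiltersLE, le_def]
  rw [this]
  exact isClosed_biInter fun s _ => ultrafilter_isClosed_basic s

instance : CompactSpace (ultrafiltersLE F) :=
  isCompact_iff_compactSpace.mp (isClosed_ultrafiltersLE F).isCompact

instance : Module.Free ℤ (LocallyConstant (ultrafiltersLE F) ℤ) :=
  LocallyConstant.freeOfProfinite (Profinite.of (ultrafiltersLE F))

noncomputable def ultrafilterLimLE : boundedFns X →+ LocallyConstant (ultrafiltersLE F) ℤ :=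
  (LocallyConstant.comapAddMonoidHom ⟨Subtype.val, continuous_subtype_val⟩).comp ultrafilterLim

theorem ultrafilterLimLE_surjective : Surjective (ultrafilterLimLE F) :=
  (LocallyConstant.comapAddMonoidHom_subtypeVal_surjective (isClosed_ultrafiltersLE F)).comp
    ultrafilterLim_surjective

theorem ultrafilterLimLE_eq_zero_iff {f : boundedFns X} :
    ultrafilterLimLE F f = 0 ↔ ∀ᶠ x in F, (f : X → ℤ) x = 0 := by
  rw [LocallyConstant.ext_iff, Filter.Eventually, mem_iff_ultrafilter, Subtype.forall]
  exact forall₂_congr fun u _ => limUnder_eq_iff_of_mem_boundedFns f.2 u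

theorem mem_map_ker_ultrafilterLimLE {f : X → ℤ} :
    f ∈ (ultrafilterLimLE F).ker.map (boundedFns X).subtype ↔
      f ∈ boundedFns X ∧ ∀ᶠ x in F, f x = 0 := by
  constructor
  · rintro ⟨f, hf, rfl⟩
    exact ⟨f.2, (ultrafilterLimLE_eq_zero_iff F).mp hf⟩
  · rintro ⟨hfB, hf⟩
    exact ⟨⟨f, hfB⟩, (ultrafilterLimLE_eq_zero_iff F).mpr hf, rfl⟩

end EventuallyZero

def denseOpenFilter (X : Type*) [TopologicalSpace X] : Filter X where
  sets := {s | ∃ U, IsOpen U ∧ Dense U ∧ U ⊆ s}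
  univ_sets := ⟨univ, isOpen_univ, dense_univ, subset_rfl⟩
  sets_of_superset := fun ⟨U, hU, hUd, hUs⟩ hst => ⟨U, hU, hUd, hUs.trans hst⟩
  inter_sets := fun ⟨U, hU, hUd, hUs⟩ ⟨V, hV, hVd, hVt⟩ =>
    ⟨U ∩ V, hU.inter hV, hUd.inter_of_isOpen_left hVd hU, inter_subset_inter hUs hVt⟩

theorem isResidualFn_iff_eventually {X : Type*} [TopologicalSpace X] {f : X → ℤ} :
    IsResidualFn f ↔ ∀ᶠ x in denseOpenFilter X, f x = 0 := Iff.rfl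

theorem residualBoundedFns_eq_map_ker (X : Type*) [TopologicalSpace X] :
    residualBoundedFns X =
      (ultrafilterLimLE (denseOpenFilter X)).ker.map (boundedFns X).subtype := by
  ext f
  change IsResidualFn f ∧ f ∈ boundedFns X ↔ _
  rw [mem_map_ker_ultrafilterLimLE, isResidualFn_iff_eventually, and_comm]

/-- `QZ_b(X)` is a direct summand of `B(X,ℤ)`: there is a subgroup `H` of `B(X,ℤ)`
such that `B(X,ℤ)` is the internal direct sum of `QZ_b(X)` and `H`. -/
theorem residualBounded_direct_summand (X : Type*) [TopologicalSpace X] :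
    ∃ H : AddSubgroup (X → ℤ), H ≤ boundedFns X ∧
      residualBoundedFns X ⊓ H = ⊥ ∧ residualBoundedFns X ⊔ H = boundedFns X := by
  rw [residualBoundedFns_eq_map_ker]
  exact AddSubgroup.exists_compl_map_ker_of_surjective (ultrafilterLimLE_surjective _)
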